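/- The state ρ(x,t) with t = 1/20 and x = 0.63 is PPT: its partial transpose is positive semidefinite (and hence, being entangled, it is a bound entangled state). -/
import Mathlib


open Matrix
open scoped ComplexOrder

/-- Partial transpose on the second factor of `ℂ^3 ⊗ ℂ^3`, in the standard basis. -/
def partialTranspose (ρ : Matrix (Fin 3 × Fin 3) (Fin 3 × Fin 3) ℂ) :
    Matrix (Fin 3 × Fin 3) (Fin 3 × Fin 3) ℂ :=
  Matrix.of fun p q => ρ (p.1, q.2) (q.1, p.2)


/-- Diagonal entries of the unnormalized state: in the paper's ordering
`(1+t, t, 1/t, 1/t, 1+t, t, 1, 1/t, 1)`. -/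
noncomputable def diagEntry (t : ℝ) : Fin 3 × Fin 3 → ℝ
  | (0, 0) => 1 + t
  | (0, 1) => t
  | (0, 2) => 1 / t
  | (1, 0) => 1 / t
  | (1, 1) => 1 + t
  | (1, 2) => t
  | (2, 0) => 1
  | (2, 1) => 1 / t
  | (2, 2) => 1

/-- The (upper) positions carrying the entry `x`, i.e. (1,5),(1,9),(5,9),(2,4),(3,7),(6,8)
in the 1-indexed `9 × 9` labelling with index `(i,k) ↦ 3i + k + 1`. -/
def xPos (p q : Fin 3 × Fin 3) : Prop :=
  (p = (0, 0) ∧ q = (1, 1)) ∨ (p = (0, 0) ∧ q = (2, 2)) ∨ (p = (1, 1) ∧ q = (2, 2)) ∨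
  (p = (0, 1) ∧ q = (1, 0)) ∨ (p = (0, 2) ∧ q = (2, 0)) ∨ (p = (1, 2) ∧ q = (2, 1))

instance : DecidableRel xPos := fun p q => by unfold xPos; infer_instance

/-- The two-parameter state `ρ(x,t)` of the paper, with normalization
`K = 1/(4 + 3/t + 4t)`. -/
noncomputable def rhoXT (x t : ℝ) : Matrix (Fin 3 × Fin 3) (Fin 3 × Fin 3) ℂ :=
  Matrix.of fun p q =>
    ((1 / (4 + 3 / t + 4 * t) : ℝ) : ℂ) *
      (if p = q then ((diagEntry t p : ℝ) : ℂ)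
       else if xPos p q ∨ xPos q p then (x : ℂ) else 0)

/-- Unit lower-triangular factor of an LDL decomposition. -/
noncomputable def Lent : Matrix (Fin 3 × Fin 3) (Fin 3 × Fin 3) ℂ :=
  Matrix.of fun p q =>
    if p = q then 1
    else if p = (1, 0) ∧ q = (0, 1) then 63 / 5
    else if p = (1, 1) ∧ q = (0, 0) then 3 / 5
    else if p = (2, 0) ∧ q = (0, 2) then 63 / 2000
    else if p = (2, 1) ∧ q = (1, 2) then 63 / 5
    else if p = (2, 2) ∧ q = (0, 0) then 3 / 5
    else if p = (2, 2) ∧ q = (1, 1) then 3 / 8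
    else 0

/-- Diagonal factor of the LDL decomposition. -/
noncomputable def dEnt : Fin 3 × Fin 3 → ℝ := fun p =>
  if p = (0, 0) then 7 / 428
  else if p = (0, 1) then 1 / 1284
  else if p = (0, 2) then 100 / 321
  else if p = (1, 0) then 6031 / 32100
  else if p = (1, 1) then 28 / 2675
  else if p = (1, 2) then 1 / 1284
  else if p = (2, 0) then 196031 / 12840000
  else if p = (2, 1) then 6031 / 32100
  else 211 / 25680

set_option maxHeartbeats 4000000 in
/-- the state `ρ(x,t)` with `t = 1/20`, `x = 0.63` is PPT. -/
theorem rhoXT_ppt : (partialTranspose (rhoXT 0.63 (1/20))).PosSemidef := by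
  have key : partialTranspose (rhoXT 0.63 (1/20)) =
      Lent * (Matrix.diagonal fun p => ((dEnt p : ℝ) : ℂ)) * Lentᴴ := by
    ext p q
    fin_cases p <;> fin_cases q <;>
      (simp [partialTranspose, rhoXT, diagEntry, xPos, Matrix.mul_apply,
        Matrix.diagonal_apply, Fintype.sum_prod_type, Fin.sum_univ_succ, Lent, dEnt,
        Matrix.conjTranspose_apply, Prod.ext_iff, map_div₀, Complex.conj_ofNat] <;> norm_num)
  rw [key]
  have hd : (Matrix.diagonal fun p => ((dEnt p : ℝ) : ℂ)).PosSemidef := by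
    rw [Matrix.posSemidef_diagonal_iff]
    intro i
    rw [Complex.zero_le_real]
    unfold dEnt
    split_ifs <;> norm_num
  exact hd.mul_mul_conjTranspose_same _
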